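/- Let $\tau=\beta>0$, let $(\alpha_j)_{j\ge1}\in\ell^1(\mathbb N)$ with $\alpha_j\ge0$ and $\sup_j\alpha_j<\frac{1}{\beta}$, and let $\mu_\beta$ be the countable product of $\beta$-Gaussian measures with density $\varphi_\beta$. Then for every $q\in\big(0,\frac{1}{\beta\sup_j\alpha_j}\big)$, $\int \exp\big(q\sum_{j\ge1}\alpha_j|y_j|^{\beta}\big)\,\mu_\beta(dy)<\infty$. -/

import Mathlib

/-!
Under the product measure the coordinates are independent `β`-Gaussians, so the integral of
`exp (q ∑_{j<n} α j |y j|^β)` factors into one-dimensional integrals. Each of these equals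
`(1 - qβ α j)^(-1/β)`, because the tilt `exp (c |y|^β)` turns `φ_β(y)` into `φ_β(a y)` with
`a = (1 - βc)^(1/β)`. From `-log (1 - r) ≤ r / (1 - r)` these factors are at most
`exp (q α j / (1 - qβ sup α))`, so the partial products stay below `exp (q ∑ α / (1 - qβ sup α))`,
and monotone convergence passes to the full series.
-/

open MeasureTheory

/-- The generalized `β`-Gaussian probability density on `ℝ`. -/
noncomputable def phiBeta (β y : ℝ) : ℝ :=
  1 / (2 * β ^ (1 / β) * Real.Gamma (1 + 1 / β)) * Real.exp (-|y| ^ β / β)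

/-- The `β`-Gaussian measure `𝒩_β(0,1)` on `ℝ`. -/
noncomputable def gaussBeta (β : ℝ) : Measure ℝ :=
  volume.withDensity fun y => ENNReal.ofReal (phiBeta β y)

/-- `μ` is the countable product `⨂_{j≥1} 𝒩_β(0,1)` on `ℝ^ℕ`: it is a probability
measure whose finite-dimensional cylinder probabilities factor as products of
one-dimensional `β`-Gaussian measures. -/
def IsProductBetaGaussian (β : ℝ) (μ : Measure (ℕ → ℝ)) : Prop :=
  IsProbabilityMeasure μ ∧
    ∀ (s : Finset ℕ) (A : ℕ → Set ℝ), (∀ i, MeasurableSet (A i)) →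
      μ {y : ℕ → ℝ | ∀ i ∈ s, y i ∈ A i} = ∏ i ∈ s, gaussBeta β (A i)

open Set Finset ENNReal ProbabilityTheory

lemma ENNReal.prod_ofReal_exp {ι : Type*} (s : Finset ι) (f : ι → ℝ) :
    ∏ i ∈ s, ENNReal.ofReal (Real.exp (f i)) = ENNReal.ofReal (Real.exp (∑ i ∈ s, f i)) := by
  rw [Real.exp_sum, ENNReal.ofReal_prod_of_nonneg fun i _ => (Real.exp_pos _).le]

lemma Real.one_sub_rpow_neg_le_exp {β r s : ℝ} (hβ : 0 < β) (hr : 0 ≤ r) (hrs : r ≤ s)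
    (hs : s < 1) : (1 - r) ^ (-(1 / β)) ≤ Real.exp (r / (β * (1 - s))) := by
  have hr1 : 0 < 1 - r := by linarith
  have hs1 : 0 < 1 - s := by linarith
  have hlog : -Real.log (1 - r) ≤ r / (1 - r) := by
    have := Real.one_sub_inv_le_log_of_pos hr1
    rw [show r / (1 - r) = (1 - r)⁻¹ - 1 by field_simp; ring]
    linarith
  rw [Real.rpow_def_of_pos hr1, Real.exp_le_exp]
  calc Real.log (1 - r) * -(1 / β) = (1 / β) * -Real.log (1 - r) := by ring
    _ ≤ (1 / β) * (r / (1 - s)) := by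
      gcongr
      exact hlog.trans (div_le_div_of_nonneg_left hr hs1 (by linarith))
    _ = r / (β * (1 - s)) := by field_simp

lemma phiBeta_nonneg {β : ℝ} (hβ : 0 < β) (y : ℝ) : 0 ≤ phiBeta β y := by
  have := Real.Gamma_pos_of_pos (show 0 < 1 + 1 / β by positivity)
  unfold phiBeta
  positivity

lemma measurable_phiBeta (β : ℝ) : Measurable (phiBeta β) := by
  unfold phiBeta
  fun_prop

lemma phiBeta_mul {β a : ℝ} (hβ : 0 < β) (ha : 0 ≤ a) (y : ℝ) :
    phiBeta β (a * y) = phiBeta β y * Real.exp ((1 - a ^ β) / β * |y| ^ β) := by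
  unfold phiBeta
  rw [mul_assoc _ (Real.exp _), ← Real.exp_add, abs_mul, abs_of_nonneg ha,
    Real.mul_rpow ha (abs_nonneg y)]
  congr 2
  field_simp
  ring

lemma lintegral_phiBeta_comp_mul {β a : ℝ} (ha : 0 < a) :
    ∫⁻ y, ENNReal.ofReal (phiBeta β (a * y)) =
      ENNReal.ofReal a⁻¹ * ∫⁻ y, ENNReal.ofReal (phiBeta β y) := by
  have hφ : Measurable fun y => ENNReal.ofReal (phiBeta β y) :=
    (measurable_phiBeta β).ennreal_ofReal
  rw [← lintegral_map hφ (measurable_const_mul a), Real.map_volume_mul_left ha.ne',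
    abs_of_pos (inv_pos.mpr ha), lintegral_smul_measure, smul_eq_mul]

lemma lintegral_exp_mul_abs_rpow_gaussBeta {β c : ℝ} (hβ : 0 < β) (hc : β * c < 1) :
    ∫⁻ y, ENNReal.ofReal (Real.exp (c * |y| ^ β)) ∂gaussBeta β =
      ENNReal.ofReal ((1 - β * c) ^ (-(1 / β))) * gaussBeta β univ := by
  have ht : 0 < 1 - β * c := by linarith
  set a := (1 - β * c) ^ (1 / β) with ha
  have ha0 : 0 < a := Real.rpow_pos_of_pos ht _
  have haβ : a ^ β = 1 - β * c := by
    rw [ha, ← Real.rpow_mul ht.le, one_div_mul_cancel hβ.ne', Real.rpow_one]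
  have hc' : (1 - a ^ β) / β = c := by rw [haβ]; field_simp; ring
  have hainv : a⁻¹ = (1 - β * c) ^ (-(1 / β)) := by rw [ha, Real.rpow_neg ht.le]
  rw [gaussBeta, lintegral_withDensity_eq_lintegral_mul _ (measurable_phiBeta β).ennreal_ofReal
      (by fun_prop), withDensity_apply _ MeasurableSet.univ, Measure.restrict_univ, ← hainv,
    ← lintegral_phiBeta_comp_mul ha0]
  congr 1 with y
  rw [Pi.mul_apply, ← ENNReal.ofReal_mul (phiBeta_nonneg hβ y), phiBeta_mul hβ ha0.le, hc']

lemma lintegral_exp_mul_abs_rpow_gaussBeta_le {β c s : ℝ} [IsProbabilityMeasure (gaussBeta β)]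
    (hβ : 0 < β) (hc : 0 ≤ c) (hcs : β * c ≤ s) (hs : s < 1) :
    ∫⁻ y, ENNReal.ofReal (Real.exp (c * |y| ^ β)) ∂gaussBeta β ≤
      ENNReal.ofReal (Real.exp (c / (1 - s))) := by
  rw [lintegral_exp_mul_abs_rpow_gaussBeta hβ (hcs.trans_lt hs), measure_univ, mul_one]
  refine ENNReal.ofReal_le_ofReal
    ((Real.one_sub_rpow_neg_le_exp hβ (by positivity) hcs hs).trans_eq ?_)
  field_simp

lemma IsProductBetaGaussian.isProbabilityMeasure_gaussBeta {β : ℝ} {μ : Measure (ℕ → ℝ)}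
    (hμ : IsProductBetaGaussian β μ) : IsProbabilityMeasure (gaussBeta β) := by
  obtain ⟨hprob, hcyl⟩ := hμ
  constructor
  simpa using (hcyl {0} (fun _ => univ) fun _ => MeasurableSet.univ).symm

lemma IsProductBetaGaussian.eq_infinitePi {β : ℝ} [IsProbabilityMeasure (gaussBeta β)]
    {μ : Measure (ℕ → ℝ)} (hμ : IsProductBetaGaussian β μ) :
    μ = Measure.infinitePi fun _ => gaussBeta β :=
  Measure.eq_infinitePi _ hμ.2

lemma lintegral_finset_prod_infinitePi {ι : Type*} {X : ι → Type*}
    [∀ i, MeasurableSpace (X i)] (P : ∀ i, Measure (X i)) [∀ i, IsProbabilityMeasure (P i)]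
    {g : ∀ i, X i → ℝ≥0∞} (hg : ∀ i, Measurable (g i)) (s : Finset ι) :
    ∫⁻ x, ∏ i ∈ s, g i (x i) ∂Measure.infinitePi P = ∏ i ∈ s, ∫⁻ y, g i y ∂P i := by
  rw [lintegral_prod_eq_prod_lintegral_of_indepFun s _ (iIndepFun_infinitePi hg)
    fun i => (hg i).comp (measurable_pi_apply i)]
  refine Finset.prod_congr rfl fun i _ => ?_
  exact (measurePreserving_eval_infinitePi P i).lintegral_comp (hg i)

lemma lintegral_ofReal_exp_mul_tsum_le {X : Type*} [MeasurableSpace X] (ν : Measure X)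
    {c : ℝ} (hc : 0 ≤ c) {h : ℕ → X → ℝ} (hh : ∀ j, Measurable (h j)) (h0 : ∀ j y, 0 ≤ h j y) :
    ∫⁻ y in {y | Summable fun j => h j y}, ENNReal.ofReal (Real.exp (c * ∑' j, h j y)) ∂ν ≤
      ⨆ n, ∫⁻ y, ∏ j ∈ range n, ENNReal.ofReal (Real.exp (c * h j y)) ∂ν := by
  set G : ℕ → X → ℝ≥0∞ := fun n y => ∏ j ∈ range n, ENNReal.ofReal (Real.exp (c * h j y))
  have hG : ∀ n y, G n y = ENNReal.ofReal (Real.exp (c * ∑ j ∈ range n, h j y)) := by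
    intro n y
    simp only [G, ENNReal.prod_ofReal_exp, Finset.mul_sum]
  have hGmono : Monotone G := by
    intro m n hmn y
    simp only [hG]
    gcongr
    exact fun j _ _ => h0 j y
  have hGmeas : ∀ n, Measurable (G n) := fun n => by
    simp only [G]
    fun_prop
  have hlim : ∀ y ∈ {y | Summable fun j => h j y},
      ENNReal.ofReal (Real.exp (c * ∑' j, h j y)) ≤ ⨆ n, G n y := by
    intro y hy
    refine le_of_eq <| tendsto_nhds_unique ?_ (tendsto_atTop_iSup fun m n hmn => hGmono hmn y)
    simp only [hG]
    exact ENNReal.tendsto_ofReal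
      ((Real.continuous_exp.tendsto _).comp ((hy.hasSum.tendsto_sum_nat).const_mul c))
  calc ∫⁻ y in {y | Summable fun j => h j y}, ENNReal.ofReal (Real.exp (c * ∑' j, h j y)) ∂ν
      ≤ ∫⁻ y in {y | Summable fun j => h j y}, ⨆ n, G n y ∂ν :=
        setLIntegral_mono (.iSup hGmeas) hlim
    _ ≤ ∫⁻ y, ⨆ n, G n y ∂ν := setLIntegral_le_lintegral _ _
    _ = ⨆ n, ∫⁻ y, G n y ∂ν := lintegral_iSup hGmeas hGmono

theorem stmt12_general (β q : ℝ) (α : ℕ → ℝ)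
    (hβ : 0 < β) (hα : ∀ j, 0 ≤ α j) (hsum : Summable α)
    (hq : 0 < q) (hqbound : q * β * (⨆ j, α j) < 1)
    (μ : Measure (ℕ → ℝ)) (hμ : IsProductBetaGaussian β μ) :
    ∫⁻ y in {y : ℕ → ℝ | Summable fun j => α j * |y j| ^ β},
        ENNReal.ofReal (Real.exp (q * ∑' j, α j * |y j| ^ β)) ∂μ < ⊤ := by
  have := hμ.isProbabilityMeasure_gaussBeta
  set s := q * β * ⨆ j, α j
  have hqα (j : ℕ) : 0 ≤ q * α j := mul_nonneg hq.le (hα j)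
  have hαs (j : ℕ) : β * (q * α j) ≤ s := by
    rw [show β * (q * α j) = q * β * α j by ring]
    exact mul_le_mul_of_nonneg_left (le_ciSup hsum.tendsto_atTop_zero.bddAbove_range j)
      (by positivity)
  set g : ℕ → ℝ → ℝ≥0∞ := fun j t => ENNReal.ofReal (Real.exp (q * (α j * |t| ^ β)))
  have hg (j : ℕ) : Measurable (g j) := by simp only [g]; fun_prop
  have hgbound (j : ℕ) :
      ∫⁻ t, g j t ∂gaussBeta β ≤ ENNReal.ofReal (Real.exp (q * α j / (1 - s))) := by
    simpa only [g, mul_assoc] using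
      lintegral_exp_mul_abs_rpow_gaussBeta_le hβ (hqα j) (hαs j) hqbound
  calc _ ≤ ⨆ n, ∫⁻ y, ∏ j ∈ range n, g j (y j) ∂μ :=
        lintegral_ofReal_exp_mul_tsum_le μ hq.le (fun j => by fun_prop)
          fun j y => mul_nonneg (hα j) (by positivity)
    _ = ⨆ n, ∏ j ∈ range n, ∫⁻ t, g j t ∂gaussBeta β := by
        simp_rw [hμ.eq_infinitePi, lintegral_finset_prod_infinitePi _ hg]
    _ ≤ ENNReal.ofReal (Real.exp (∑' j, q * α j / (1 - s))) := by
        refine iSup_le fun n => (prod_le_prod' fun j _ => hgbound j).trans ?_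
        rw [ENNReal.prod_ofReal_exp]
        gcongr
        exact ((hsum.mul_left q).div_const _).sum_le_tsum _
          fun j _ => div_nonneg (hqα j) (by linarith)
    _ < ⊤ := ENNReal.ofReal_lt_top

theorem stmt12 (β q : ℝ) (α : ℕ → ℝ)
    (hβ : 0 < β) (hα : ∀ j, 0 ≤ α j) (hsum : Summable α)
    (hαsup : (⨆ j, α j) < 1 / β)
    (hq : 0 < q) (hqbound : q * β * (⨆ j, α j) < 1)
    (μ : Measure (ℕ → ℝ)) (hμ : IsProductBetaGaussian β μ) :
    ∫⁻ y in {y : ℕ → ℝ | Summable fun j => α j * |y j| ^ β},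
        ENNReal.ofReal (Real.exp (q * ∑' j, α j * |y j| ^ β)) ∂μ < ⊤ :=
  stmt12_general β q α hβ hα hsum hq hqbound μ hμ
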